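/- The classical Newton identity recovered from the quantum one at q = 1 and R = P: for L(u) the generating matrix of Y(gl(N)), k·e_k(u) − p₁(u−k+1)e_{k−1}(u) + p₂(u−k+2)e_{k−2}(u) − … + (−1)ᵏ p_k(u) = 0, where e_j(u) = Tr₍₁…ⱼ₎(A⁽ʲ⁾L₁(u)⋯Lⱼ(u−j+1)) and p_j(u) = Tr₍₁…ⱼ₎(L₁(u−j+1)⋯Lⱼ(u)Pⱼ₋₁⋯P₁), for the case k = 2: 2e₂(u) = p₁(u−1)e₁(u) − p₂(u). -/
import Mathlib


open Matrix BigOperators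

noncomputable section

/-- The operator on `n` tensor factors of `ℂ^N` acting as the two-site operator `R`
at (0-indexed) tensor positions `i, i+1` and as the identity elsewhere
(junk value `0` if `i+1 ≥ n`). -/
def opAt {A : Type} [Ring A] {N n : ℕ}
    (R : Matrix (Fin N × Fin N) (Fin N × Fin N) A) (i : ℕ) :
    Matrix (Fin n → Fin N) (Fin n → Fin N) A :=
  fun f g =>
    if h : i + 1 < n then
      if ∀ j : Fin n, (j : ℕ) ≠ i → (j : ℕ) ≠ i + 1 → f j = g j then
        R (f ⟨i, Nat.lt_of_succ_lt h⟩, f ⟨i + 1, h⟩)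
          (g ⟨i, Nat.lt_of_succ_lt h⟩, g ⟨i + 1, h⟩)
      else 0
    else 0

/-- The operator on `n` tensor factors acting as the one-site matrix `M`
at (0-indexed) position `i` and as the identity elsewhere. -/
def matAt {A : Type} [Ring A] {N n : ℕ}
    (M : Matrix (Fin N) (Fin N) A) (i : ℕ) :
    Matrix (Fin n → Fin N) (Fin n → Fin N) A :=
  fun f g =>
    if h : i < n then
      if ∀ j : Fin n, (j : ℕ) ≠ i → f j = g j then M (f ⟨i, h⟩) (g ⟨i, h⟩) else 0
    else 0

/-- The `q`-number `k_q = (q^k - q^{-k})/(q - q^{-1})`. -/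
def qInt (q : ℂ) (k : ℕ) : ℂ := (q ^ k - q⁻¹ ^ k) / (q - q⁻¹)

/-- The trigonometric (Hecke) Baxterized current operator
`R(u,v) = R - ((q - q⁻¹) u/(u - v)) I`. -/
def trigCur {N : ℕ} (R : Matrix (Fin N × Fin N) (Fin N × Fin N) ℂ) (q u v : ℂ) :
    Matrix (Fin N × Fin N) (Fin N × Fin N) ℂ :=
  R - (((q - q⁻¹) * u) / (u - v)) • 1

/-- The rational Baxterized current operator `R(u,v) = R - (1/(u - v)) I`. -/
def ratCur {N : ℕ} (R : Matrix (Fin N × Fin N) (Fin N × Fin N) ℂ) (u v : ℂ) :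
    Matrix (Fin N × Fin N) (Fin N × Fin N) ℂ :=
  R - ((u - v)⁻¹ : ℂ) • 1

/-- The Hecke skew-symmetrizers `A^{(k)}` starting at (0-indexed) tensor position `s`,
defined by the recursion
`A^{(k+1)} = (k_q/(k+1)_q) A^{(k)} ((q^k/k_q) I - R_{s+k-1}) A^{(k)}`. -/
def skewSym {A : Type} [Ring A] [Algebra ℂ A] {N n : ℕ}
    (R : Matrix (Fin N × Fin N) (Fin N × Fin N) A) (q : ℂ) :
    ℕ → ℕ → Matrix (Fin n → Fin N) (Fin n → Fin N) A
  | 0, _ => 1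
  | 1, _ => 1
  | (k + 2), s =>
      (qInt q (k + 1) / qInt q (k + 2)) •
        (skewSym R q (k + 1) s *
          ((q ^ (k + 1) / qInt q (k + 1)) • (1 : Matrix (Fin n → Fin N) (Fin n → Fin N) A)
            - opAt R (s + k)) *
          skewSym R q (k + 1) s)

/-- The copies `L_{\overline{k+1}} = R_k L_{\overline k} R_k^{-1}` of a one-site matrix `L`
(0-indexed: `lCopy R Rinv L 0 = L₁`). -/
def lCopy {A : Type} [Ring A] {N n : ℕ}
    (R Rinv : Matrix (Fin N × Fin N) (Fin N × Fin N) A)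
    (L : Matrix (Fin N) (Fin N) A) : ℕ → Matrix (Fin n → Fin N) (Fin n → Fin N) A
  | 0 => matAt L 0
  | (k + 1) => opAt R k * lCopy R Rinv L k * opAt Rinv k

/-- The `n`-fold tensor power `C ⊗ ⋯ ⊗ C` of a one-site matrix. -/
def cProd {N n : ℕ} (C : Matrix (Fin N) (Fin N) ℂ) :
    Matrix (Fin n → Fin N) (Fin n → Fin N) ℂ :=
  fun f g => ∏ j, C (f j) (g j)

/-- Two-site tensor square `C ⊗ C`. -/
def cTwo {N : ℕ} (C : Matrix (Fin N) (Fin N) ℂ) :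
    Matrix (Fin N × Fin N) (Fin N × Fin N) ℂ :=
  fun a b => C a.1 b.1 * C a.2 b.2

/-- Weighted partial trace over the second factor: `Tr₍₂₎(C₂ X)`. -/
def ptr2 {N : ℕ} (C : Matrix (Fin N) (Fin N) ℂ)
    (X : Matrix (Fin N × Fin N) (Fin N × Fin N) ℂ) : Matrix (Fin N) (Fin N) ℂ :=
  fun i j => ∑ a, ∑ b, C a b * X (i, b) (j, a)

/-- Lift a complex matrix to a matrix over a `ℂ`-algebra `A`. -/
def lift (A : Type) [Ring A] [Algebra ℂ A] {m : Type} (X : Matrix m m ℂ) : Matrix m m A :=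
  X.map (algebraMap ℂ A)
/-- The flip (permutation) operator `P` on `ℂ^N ⊗ ℂ^N`. -/
def flipP (N : ℕ) : Matrix (Fin N × Fin N) (Fin N × Fin N) ℂ :=
  fun a b => if a.1 = b.2 ∧ a.2 = b.1 then 1 else 0


set_option linter.unusedSectionVars false

section Aux

variable {A : Type} [Ring A] [Algebra ℂ A] {N : ℕ}

lemma opAt_sub {n : ℕ} (X Y : Matrix (Fin N × Fin N) (Fin N × Fin N) A) (i : ℕ) :
    opAt (n := n) (X - Y) i = opAt (n := n) X i - opAt (n := n) Y i := by
  ext f g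
  simp only [opAt, Matrix.sub_apply]
  split_ifs <;> simp

lemma opAt_one : opAt (n := 2) (1 : Matrix (Fin N × Fin N) (Fin N × Fin N) A) 0 = 1 := by
  ext f g
  have hv : ∀ j : Fin 2, (j : ℕ) ≠ 0 → (j : ℕ) ≠ 0 + 1 → f j = g j := by
    intro j h0 h1
    exact absurd j.isLt (by omega)
  simp only [opAt]
  rw [dif_pos (by norm_num : 0 + 1 < 2), if_pos hv]
  by_cases h : f = g
  · subst h
    simp [Matrix.one_apply]
  · have hne : (f ⟨0, by norm_num⟩, f ⟨0 + 1, by norm_num⟩) ≠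
        (g ⟨0, by norm_num⟩, g ⟨0 + 1, by norm_num⟩) := by
      intro hc
      apply h
      funext j
      fin_cases j
      · exact congrArg Prod.fst hc
      · exact congrArg Prod.snd hc
    rw [Matrix.one_apply_ne hne, Matrix.one_apply_ne h]

lemma lift_one : lift A (1 : Matrix (Fin N × Fin N) (Fin N × Fin N) ℂ) = 1 := by
  simp [lift, Matrix.map_one]

lemma lift_sub {m : Type} (X Y : Matrix m m ℂ) : lift A (X - Y) = lift A X - lift A Y := by
  simp [lift, Matrix.map_sub]

lemma matAt_zero_apply (M : Matrix (Fin N) (Fin N) A) (f g : Fin 2 → Fin N) :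
    matAt (n := 2) M 0 f g = if f 1 = g 1 then M (f 0) (g 0) else 0 := by
  have hc : (∀ j : Fin 2, (j : ℕ) ≠ 0 → f j = g j) ↔ f 1 = g 1 := by
    constructor
    · intro h; exact h 1 (by norm_num)
    · intro h j hj; fin_cases j
      · simp at hj
      · exact h
  simp only [matAt, dif_pos (by norm_num : (0:ℕ) < 2), hc]
  congr

lemma matAt_one_apply (M : Matrix (Fin N) (Fin N) A) (f g : Fin 2 → Fin N) :
    matAt (n := 2) M 1 f g = if f 0 = g 0 then M (f 1) (g 1) else 0 := by
  have hc : (∀ j : Fin 2, (j : ℕ) ≠ 1 → f j = g j) ↔ f 0 = g 0 := by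
    constructor
    · intro h; exact h 0 (by norm_num)
    · intro h j hj; fin_cases j
      · exact h
      · simp at hj
  simp only [matAt, dif_pos (by norm_num : (1:ℕ) < 2), hc]
  congr

lemma sum_pi_fin_two {M : Type} [AddCommMonoid M] (F : Fin N → Fin N → M) :
    (∑ f : Fin 2 → Fin N, F (f 0) (f 1)) = ∑ a, ∑ b, F a b := by
  calc (∑ f : Fin 2 → Fin N, F (f 0) (f 1))
      = ∑ p : Fin N × Fin N, F p.1 p.2 :=
        Fintype.sum_equiv (piFinTwoEquiv fun _ => Fin N) _ _ (fun f => rfl)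
    _ = ∑ a, ∑ b, F a b := Fintype.sum_prod_type (fun p => F p.1 p.2)

lemma trace_matAt_mul (M M' : Matrix (Fin N) (Fin N) A) :
    Matrix.trace (matAt (n := 2) M 0 * matAt (n := 2) M' 1) =
      Matrix.trace M * Matrix.trace M' := by
  have hdiag : ∀ f : Fin 2 → Fin N,
      (matAt (n := 2) M 0 * matAt (n := 2) M' 1) f f = M (f 0) (f 0) * M' (f 1) (f 1) := by
    intro f
    rw [Matrix.mul_apply]
    have h : (∑ g : Fin 2 → Fin N,
        matAt (n := 2) M 0 f g * matAt (n := 2) M' 1 g f) =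
        ∑ c, ∑ d, (if f 1 = d then M (f 0) c else 0) * (if c = f 0 then M' d (f 1) else 0) := by
      rw [← sum_pi_fin_two (fun c d => (if f 1 = d then M (f 0) c else 0) *
        (if c = f 0 then M' d (f 1) else 0))]
      refine Finset.sum_congr rfl fun g _ => ?_
      rw [matAt_zero_apply, matAt_one_apply]
    rw [h]
    simp [ite_mul, mul_ite, Finset.sum_ite_eq, Finset.sum_ite_eq']
  simp only [Matrix.trace, Matrix.diag]
  calc (∑ f : Fin 2 → Fin N, (matAt (n := 2) M 0 * matAt (n := 2) M' 1) f f)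
      = ∑ f : Fin 2 → Fin N, M (f 0) (f 0) * M' (f 1) (f 1) :=
        Finset.sum_congr rfl fun f _ => hdiag f
    _ = ∑ a, ∑ b, M a a * M' b b := sum_pi_fin_two (fun a b => M a a * M' b b)
    _ = (∑ a, M a a) * (∑ b, M' b b) := by rw [Finset.sum_mul_sum]

end Aux

/-- the classical (q = 1, R = P) Newton identity for `k = 2`:
`2 e₂(u) = p₁(u-1) e₁(u) - p₂(u)`, where `e₁(u) = p₁(u) = Tr L(u)`,
`e₂(u) = Tr₍₁₂₎(A⁽²⁾ L₁(u) L₂(u-1))` with `A⁽²⁾ = ½(I - P)`, and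
`p₂(u) = Tr₍₁₂₎(L₁(u-1) L₂(u) P₁)`. -/
theorem yangian_newton_identity_k2 {A : Type} [Ring A] [Algebra ℂ A] {N : ℕ}
    (L : ℂ → Matrix (Fin N) (Fin N) A)
    (hYang : ∀ u v : ℂ, u ≠ v →
      opAt (n := 2) (lift A (ratCur (flipP N) u v)) 0 *
          matAt (n := 2) (L u) 0 * matAt (n := 2) (L v) 1 =
        matAt (n := 2) (L v) 0 * matAt (n := 2) (L u) 1 *
          opAt (n := 2) (lift A (ratCur (flipP N) u v)) 0)
    (u : ℂ) :
    (2 : ℂ) • Matrix.trace ((((1 : ℂ) / 2) •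
          ((1 : Matrix (Fin 2 → Fin N) (Fin 2 → Fin N) A) -
            opAt (n := 2) (lift A (flipP N)) 0)) *
        matAt (n := 2) (L u) 0 * matAt (n := 2) (L (u - 1)) 1) =
      Matrix.trace (L (u - 1)) * Matrix.trace (L u) -
        Matrix.trace (matAt (n := 2) (L (u - 1)) 0 * matAt (n := 2) (L u) 1 *
          opAt (n := 2) (lift A (flipP N)) 0) := by
  set P : Matrix (Fin 2 → Fin N) (Fin 2 → Fin N) A := opAt (n := 2) (lift A (flipP N)) 0 with hP
  have hne : u ≠ u - 1 := fun h => one_ne_zero (sub_eq_self.mp h.symm)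
  have hR : opAt (n := 2) (lift A (ratCur (flipP N) u (u - 1))) 0 = P - 1 := by
    have h1 : ratCur (flipP N) u (u - 1) = flipP N - 1 := by
      simp [ratCur, show u - (u - 1) = 1 by ring]
    rw [h1, lift_sub, opAt_sub, lift_one, opAt_one]
  have hrel := hYang u (u - 1) hne
  rw [hR] at hrel
  set M0 := matAt (n := 2) (L u) 0 with hM0
  set M1 := matAt (n := 2) (L (u - 1)) 1 with hM1
  set M0' := matAt (n := 2) (L (u - 1)) 0 with hM0'
  set M1' := matAt (n := 2) (L u) 1 with hM1'
  have key : (1 - P) * M0 * M1 = M0' * M1' - M0' * M1' * P := by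
    have h2 : (P - 1) * M0 * M1 = P * M0 * M1 - M0 * M1 := by
      simp [sub_mul]
    have h3 : M0' * M1' * (P - 1) = M0' * M1' * P - M0' * M1' := by
      simp [mul_sub]
    have h4 : (1 - P) * M0 * M1 = M0 * M1 - P * M0 * M1 := by
      simp [sub_mul]
    have h6 := hrel
    rw [h2, h3] at h6
    rw [h4]
    have h5 : M0 * M1 - P * M0 * M1 = -(P * M0 * M1 - M0 * M1) := by abel
    rw [h5, h6]
    abel
  have hsmul : (((1 : ℂ) / 2) • ((1 : Matrix (Fin 2 → Fin N) (Fin 2 → Fin N) A) - P)) * M0 * M1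
      = ((1 : ℂ) / 2) • ((1 - P) * M0 * M1) := by
    rw [Matrix.smul_mul, Matrix.smul_mul]
  rw [hsmul, Matrix.trace_smul, smul_smul, key, Matrix.trace_sub, trace_matAt_mul]
  norm_num
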